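/- Let f : E(S) → A be order-preserving with f(e) ∈ A_{α(e)} for all e ∈ E(S). Then for all e, e' ∈ E(S) one has f(ee') = α(e') f(e), and consequently f(e) f(e')⁻¹ = α(ee'). -/
import Mathlib


/-- An inverse semigroup: every element has a unique (generalized) inverse. -/
class InverseSemigroup (S : Type*) extends Semigroup S, Inv S where
  mul_inv_mul : ∀ a : S, a * a⁻¹ * a = a
  inv_mul_inv : ∀ a : S, a⁻¹ * a * a⁻¹ = a⁻¹
  inv_unique : ∀ a b : S, a * b * a = a → b * a * b = b → b = a⁻¹

/-- `e` is an idempotent. -/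
def IsIdem {S : Type*} [Mul S] (e : S) : Prop := e * e = e

/-- The natural partial order on an inverse semigroup: `a ≤ b` iff `a = e * b`
for some idempotent `e`. -/
def NatLe {S : Type*} [Mul S] (a b : S) : Prop := ∃ e, IsIdem e ∧ a = e * b

/-- An `S`-module structure `(α, λ)` on a semilattice of abelian groups `A`
(modelled as a commutative inverse semigroup): `α` is an isomorphism
`E(S) → E(A)` and `lam` is a homomorphism of `S` into endomorphisms of `A`
satisfying `λ_e(a) = α(e)a` and `λ_s(α(e)) = α(s e s⁻¹)`. -/
structure SMod (S A : Type*) [InverseSemigroup S] [InverseSemigroup A] where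
  α : S → A
  lam : S → A → A
  α_idem : ∀ e : S, IsIdem e → IsIdem (α e)
  α_mul : ∀ e f : S, IsIdem e → IsIdem f → α (e * f) = α e * α f
  α_inj : ∀ e f : S, IsIdem e → IsIdem f → α e = α f → e = f
  α_surj : ∀ g : A, IsIdem g → ∃ e : S, IsIdem e ∧ α e = g
  lam_mul : ∀ (s : S) (a b : A), lam s (a * b) = lam s a * lam s b
  lam_idem : ∀ e : S, IsIdem e → ∀ a : A, lam e a = α e * a
  lam_alpha : ∀ (s e : S), IsIdem e → lam s (α e) = α (s * e * s⁻¹)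
  lam_comp : ∀ (s t : S) (a : A), lam s (lam t a) = lam (s * t) a

section Helpers
variable {S : Type*} [InverseSemigroup S]

open InverseSemigroup

lemma my_inv_inv (a : S) : a⁻¹⁻¹ = a :=
  (inv_unique a⁻¹ a (inv_mul_inv a) (mul_inv_mul a)).symm

lemma idem_inv {e : S} (he : IsIdem e) : e⁻¹ = e := by
  have h : e * e * e = e := by rw [he, he]
  exact (inv_unique e e h h).symm

lemma idem_mul_idem {e f : S} (he : IsIdem e) (hf : IsIdem f) : IsIdem (e * f) := by
  set x := (e * f)⁻¹ with hx
  have he' : ∀ y : S, e * (e * y) = e * y := fun y => by rw [← mul_assoc, he]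
  have hf' : ∀ y : S, f * (f * y) = f * y := fun y => by rw [← mul_assoc, hf]
  have h1 : (e * f) * x * (e * f) = e * f := mul_inv_mul _
  have h2 : x * (e * f) * x = x := inv_mul_inv _
  have key : f * x * e = x := by
    apply inv_unique (e * f) (f * x * e)
    · calc e * f * (f * x * e) * (e * f)
          = e * (f * (f * (x * (e * (e * f))))) := by simp only [mul_assoc]
        _ = e * (f * (x * (e * f))) := by rw [hf', he']
        _ = e * f * x * (e * f) := by simp only [mul_assoc]
        _ = e * f := h1
    · calc f * x * e * (e * f) * (f * x * e)
          = f * (x * (e * (e * (f * (f * (x * e)))))) := by simp only [mul_assoc]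
        _ = f * (x * (e * (f * (x * e)))) := by rw [he', hf']
        _ = f * (x * (e * f) * x * e) := by simp only [mul_assoc]
        _ = f * (x * e) := by rw [h2]
        _ = f * x * e := by rw [mul_assoc]
  have hxi : IsIdem x := by
    show x * x = x
    nth_rewrite 1 [← key]
    calc f * x * e * x = f * x * (e * x) := by rw [mul_assoc]
      _ = f * x * (e * (f * x * e)) := by rw [key]
      _ = f * (x * (e * f) * x * e) := by simp only [mul_assoc]
      _ = f * (x * e) := by rw [h2]
      _ = f * x * e := by rw [mul_assoc]
      _ = x := key
  have : e * f = x⁻¹ := by rw [hx, my_inv_inv]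
  rw [this, idem_inv hxi]
  exact hxi

lemma idem_comm {e f : S} (he : IsIdem e) (hf : IsIdem f) : e * f = f * e := by
  have hef := idem_mul_idem he hf
  have hfe := idem_mul_idem hf he
  have he' : ∀ y : S, e * (e * y) = e * y := fun y => by rw [← mul_assoc, he]
  have hf' : ∀ y : S, f * (f * y) = f * y := fun y => by rw [← mul_assoc, hf]
  have h1 : (e * f) * (f * e) * (e * f) = e * f := by
    calc (e * f) * (f * e) * (e * f)
        = e * (f * (f * (e * (e * f)))) := by simp only [mul_assoc]
      _ = e * (f * (e * f)) := by rw [hf', he']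
      _ = (e * f) * (e * f) := by simp only [mul_assoc]
      _ = e * f := hef
  have h2 : (f * e) * (e * f) * (f * e) = f * e := by
    calc (f * e) * (e * f) * (f * e)
        = f * (e * (e * (f * (f * e)))) := by simp only [mul_assoc]
      _ = f * (e * (f * e)) := by rw [he', hf']
      _ = (f * e) * (f * e) := by simp only [mul_assoc]
      _ = f * e := hfe
  have := InverseSemigroup.inv_unique (e * f) (f * e) h1 h2
  rw [this, idem_inv hef]

end Helpers

open InverseSemigroup in
lemma cinv_mul {A : Type*} [InverseSemigroup A] (hA : ∀ a b : A, a * b = b * a)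
    (a b : A) : (a * b)⁻¹ = a⁻¹ * b⁻¹ := by
  letI : CommSemigroup A := { mul_comm := hA }
  refine (inv_unique _ _ ?_ ?_).symm
  · have h : a * b * (a⁻¹ * b⁻¹) * (a * b) = (a * a⁻¹ * a) * (b * b⁻¹ * b) := by ac_rfl
    rw [h, mul_inv_mul, mul_inv_mul]
  · have h : a⁻¹ * b⁻¹ * (a * b) * (a⁻¹ * b⁻¹) = (a⁻¹ * a * a⁻¹) * (b⁻¹ * b * b⁻¹) := by ac_rfl
    rw [h, inv_mul_inv, inv_mul_inv]

open InverseSemigroup in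
/-- For an order-preserving `f : E(S) → A` with `f(e) ∈ A_{α(e)}` one has
`f(ee') = α(e') f(e)` and consequently `f(e) f(e')⁻¹ = α(ee')`. -/
theorem stmt9 {S A : Type*} [InverseSemigroup S] [InverseSemigroup A]
    (hA : ∀ a b : A, a * b = b * a) (M : SMod S A) (f : S → A)
    (hmem : ∀ e : S, IsIdem e → f e * (f e)⁻¹ = M.α e)
    (hord : ∀ e e' : S, IsIdem e → IsIdem e' → NatLe e e' → NatLe (f e) (f e')) :
    ∀ e e' : S, IsIdem e → IsIdem e' →
      f (e * e') = M.α e' * f e ∧ f e * (f e')⁻¹ = M.α (e * e') := by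
  intro e e' he he'
  letI : CommSemigroup A := { mul_comm := hA }
  have hee' : IsIdem (e * e') := idem_mul_idem he he'
  have hcomm : e * e' = e' * e := idem_comm he he'
  have key : ∀ p : S, IsIdem p → ∀ g b : A, IsIdem g → f p = g * b →
      f p = M.α p * b := by
    intro p hp g b hg hgb
    have h2 : M.α p * b = f p := by
      rw [← hmem p hp, hgb, cinv_mul hA, idem_inv hg]
      have e1 : g * b * (g * b⁻¹) * b = (g * g) * (b * b⁻¹ * b) := by ac_rfl
      rw [e1, hg, mul_inv_mul]
    exact h2.symm
  obtain ⟨g, hg, hgb⟩ := hord (e * e') e' hee' he' ⟨e, he, rfl⟩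
  obtain ⟨h, hh, hha⟩ := hord (e * e') e hee' he ⟨e', he', by rw [hcomm]⟩
  have hc1 : f (e * e') = M.α (e * e') * f e := key (e * e') hee' h (f e) hh hha
  have hc2 : f (e * e') = M.α (e * e') * f e' := key (e * e') hee' g (f e') hg hgb
  rw [M.α_mul e e' he he'] at hc1 hc2
  have hαe : M.α e * f e = f e := by rw [← hmem e he]; exact mul_inv_mul _
  have hαe' : M.α e' * f e' = f e' := by rw [← hmem e' he']; exact mul_inv_mul _
  have p1 : f (e * e') = M.α e' * f e := by
    have h3 : M.α e * M.α e' * f e = M.α e' * (M.α e * f e) := by ac_rfl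
    rw [hc1, h3, hαe]
  have p2 : f (e * e') = M.α e * f e' := by
    have h3 : M.α e * M.α e' * f e' = M.α e * (M.α e' * f e') := by ac_rfl
    rw [hc2, h3, hαe']
  refine ⟨p1, ?_⟩
  have hb : M.α e' * (f e')⁻¹ = (f e')⁻¹ := by
    rw [← hmem e' he']
    have h4 : f e' * (f e')⁻¹ * (f e')⁻¹ = (f e')⁻¹ * f e' * (f e')⁻¹ := by ac_rfl
    rw [h4, inv_mul_inv]
  calc f e * (f e')⁻¹ = f e * (M.α e' * (f e')⁻¹) := by rw [hb]
    _ = (M.α e' * f e) * (f e')⁻¹ := by ac_rfl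
    _ = (M.α e * f e') * (f e')⁻¹ := by rw [← p1, p2]
    _ = M.α e * (f e' * (f e')⁻¹) := by ac_rfl
    _ = M.α e * M.α e' := by rw [hmem e' he']
    _ = M.α (e * e') := (M.α_mul e e' he he').symm
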